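/- arXiv:1007.5434 — 3 statements merged into one kernel-verified Lean document; each statement's English description precedes it below -/
import Mathlib

section
/- The explicit quadruple (A;B;C;D), where A = (+,-,+,+,-,+,+,+,-,+,-,+,+,-,-,+,+,-,-,+,+,+,+,+,-,-,-,-,+,+,+,-,-,-,-,-,+), B = (+,+,+,-,-,-,+,-,-,-,-,-,+,+,-,-,+,+,-,-,+,-,+,-,-,+,-,+,+,-,+,+,-,+,-,+,-), C = (+,+,-,+,-,+,-,-,-,-,-,-,+,+,+,+,+,+,-,+,+,+,-,+,+,+,+,+,-,-,-,+,+,+,-,+), and D = (+,+,+,+,+,-,+,+,+,-,-,+,+,+,-,+,-,+,-,-,+,-,-,+,-,+,+,-,+,+,+,-,+,-,-,+) (with + denoting +1 and - denoting -1), is an element of NN(36): A and B have length 37, C and D have length 36, N_A(s)+N_B(s)+N_C(s)+N_D(s) = 0 for every s ≥ 1, and a_i = (-1)^(i-1) b_i for all 1 ≤ i ≤ 36. -/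
/-- Nonperiodic autocorrelation function of an integer sequence `a` of length `m`
(indexed from 1): `N_a(s) = Σ_{i=1}^{m-s} a_i a_{i+s}` (and `0` for `s ≥ m`). -/
def naf (m : ℕ) (a : ℕ → ℤ) (s : ℕ) : ℤ :=
  ∑ i ∈ Finset.range (m - s), a (i + 1) * a (i + 1 + s)

/-- `a` is a `{±1}`-sequence of length `m` (indexed from `1` to `m`). -/
def IsPM (m : ℕ) (a : ℕ → ℤ) : Prop :=
  ∀ i, 1 ≤ i → i ≤ m → a i = 1 ∨ a i = -1

/-- Base sequences `BS(m,n)`: `a, b` are `{±1}`-sequences of length `m`, `c, d` are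
`{±1}`-sequences of length `n`, and the sum of the nonperiodic autocorrelation
functions vanishes for every `s ≥ 1`. -/
def IsBS (m n : ℕ) (a b c d : ℕ → ℤ) : Prop :=
  IsPM m a ∧ IsPM m b ∧ IsPM n c ∧ IsPM n d ∧
    ∀ s, 1 ≤ s → naf m a s + naf m b s + naf n c s + naf n d s = 0

/-- Near-normal sequences `NN(n)`: base sequences in `BS(n+1,n)` with
`a_i = (-1)^(i-1) b_i` for `1 ≤ i ≤ n`. -/
def IsNN (n : ℕ) (a b c d : ℕ → ℤ) : Prop :=
  IsBS (n + 1) n a b c d ∧ ∀ i, 1 ≤ i → i ≤ n → a i = (-1) ^ (i - 1) * b i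

/-- The sequence `A` of Table 1 (`{±1}`-sequence of length 37, indexed from 1). -/
def seqA : ℕ → ℤ := fun i => (([1, -1, 1, 1, -1, 1, 1, 1, -1, 1, -1, 1, 1, -1, -1, 1, 1, -1, -1, 1, 1, 1, 1, 1, -1, -1, -1, -1, 1, 1, 1, -1, -1, -1, -1, -1, 1] : List ℤ)).getD (i - 1) 0

/-- The sequence `B` of Table 1 (`{±1}`-sequence of length 37, indexed from 1). -/
def seqB : ℕ → ℤ := fun i => (([1, 1, 1, -1, -1, -1, 1, -1, -1, -1, -1, -1, 1, 1, -1, -1, 1, 1, -1, -1, 1, -1, 1, -1, -1, 1, -1, 1, 1, -1, 1, 1, -1, 1, -1, 1, -1] : List ℤ)).getD (i - 1) 0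

/-- The sequence `C` of Table 1 (`{±1}`-sequence of length 36, indexed from 1). -/
def seqC : ℕ → ℤ := fun i => (([1, 1, -1, 1, -1, 1, -1, -1, -1, -1, -1, -1, 1, 1, 1, 1, 1, 1, -1, 1, 1, 1, -1, 1, 1, 1, 1, 1, -1, -1, -1, 1, 1, 1, -1, 1] : List ℤ)).getD (i - 1) 0

/-- The sequence `D` of Table 1 (`{±1}`-sequence of length 36, indexed from 1). -/
def seqD : ℕ → ℤ := fun i => (([1, 1, 1, 1, 1, -1, 1, 1, 1, -1, -1, 1, 1, 1, -1, 1, -1, 1, -1, -1, 1, -1, -1, 1, -1, 1, 1, -1, 1, 1, 1, -1, 1, -1, -1, 1] : List ℤ)).getD (i - 1) 0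

instance (m : ℕ) (a : ℕ → ℤ) : Decidable (IsPM m a) :=
  inferInstanceAs (Decidable (∀ i, 1 ≤ i → i ≤ m → a i = 1 ∨ a i = -1))

theorem naf_eq_zero_of_le {m s : ℕ} (a : ℕ → ℤ) (h : m ≤ s) : naf m a s = 0 := by
  simp [naf, Nat.sub_eq_zero_of_le h]

theorem IsBS.of_forall_lt {m n : ℕ} {a b c d : ℕ → ℤ} (hnm : n ≤ m) (ha : IsPM m a)
    (hb : IsPM m b) (hc : IsPM n c) (hd : IsPM n d)
    (hsum : ∀ s < m, 1 ≤ s → naf m a s + naf m b s + naf n c s + naf n d s = 0) :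
    IsBS m n a b c d := by
  refine ⟨ha, hb, hc, hd, fun s hs => ?_⟩
  rcases lt_or_ge s m with hsm | hms
  · exact hsum s hsm hs
  · simp [naf_eq_zero_of_le, hms, hnm.trans hms]

/-- The explicit quadruple `(A;B;C;D)` above is an element of `NN(36)`. -/
theorem explicit_NN36 : IsNN 36 seqA seqB seqC seqD :=
  ⟨IsBS.of_forall_lt (by norm_num) (by decide) (by decide) (by decide) (by decide)
    (by decide), by decide⟩
end

section
/- If T-sequences of length n exist, then there exists an orthogonal design OD(4n; n,n,n,n); that is, nonemptiness of TS(n) implies the existence of a 4n×4n matrix S with entries in {0, ±x_1, ±x_2, ±x_3, ±x_4} (the x_j being independent commuting indeterminates over ℤ) satisfying S Sᵀ = n(x_1² + x_2² + x_3² + x_4²) I_{4n}. -/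
/-- `a` is a `{0,±1}`-sequence of length `m` (indexed from `1` to `m`). -/
def IsTernary (m : ℕ) (a : ℕ → ℤ) : Prop :=
  ∀ i, 1 ≤ i → i ≤ m → a i = 0 ∨ a i = 1 ∨ a i = -1

/-- T-sequences `TS(n)`: four `{0,±1}`-sequences of length `n` such that for each
index exactly one of the four entries is nonzero, and the sum of the nonperiodic
autocorrelation functions vanishes for every `s ≥ 1`. -/
def IsTS (n : ℕ) (a b c d : ℕ → ℤ) : Prop :=
  IsTernary n a ∧ IsTernary n b ∧ IsTernary n c ∧ IsTernary n d ∧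
    (∀ i, 1 ≤ i → i ≤ n →
      (a i ≠ 0 ∧ b i = 0 ∧ c i = 0 ∧ d i = 0) ∨
      (a i = 0 ∧ b i ≠ 0 ∧ c i = 0 ∧ d i = 0) ∨
      (a i = 0 ∧ b i = 0 ∧ c i ≠ 0 ∧ d i = 0) ∨
      (a i = 0 ∧ b i = 0 ∧ c i = 0 ∧ d i ≠ 0)) ∧
    ∀ s, 1 ≤ s → naf n a s + naf n b s + naf n c s + naf n d s = 0

open MvPolynomial in
/-- An orthogonal design `OD(m; t,t,t,t)` in four variables: an `m × m` matrix with
entries in `{0, ±x₁, ±x₂, ±x₃, ±x₄}` (the `x_j` independent commuting indeterminates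
over `ℤ`) such that `S Sᵀ = t(x₁² + x₂² + x₃² + x₄²) I_m`. -/
def IsOD4 (m t : ℕ) (S : Matrix (Fin m) (Fin m) (MvPolynomial (Fin 4) ℤ)) : Prop :=
  (∀ i j, S i j = 0 ∨ ∃ k : Fin 4, S i j = X k ∨ S i j = -X k) ∧
    S * S.transpose = ((t : MvPolynomial (Fin 4) ℤ) * (X 0 ^ 2 + X 1 ^ 2 + X 2 ^ 2 + X 3 ^ 2)) • 1

/-!
Reading a T-sequence cyclically turns vanishing nonperiodic autocorrelation into vanishing
periodic autocorrelation, since `PAF(s) = NAF(s) + NAF(n - s)`. Combining the four sequences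
through a quaternion multiplication matrix `Q` gives four sequences with entries in `{0, ±x_k}`
(at each position exactly one T-sequence is nonzero, and it is `±1`), and `Qᵀ Q = (Σ x_k²) I`
makes their periodic autocorrelations add up to `n (Σ x_k²) δ_s`. Hence their circulant matrices
satisfy `A Aᵀ + B Bᵀ + C Cᵀ + D Dᵀ = n (Σ x_k²) I`, and the Goethals–Seidel array built from them
is the required `OD(4n; n,n,n,n)`: its orthogonality only uses that circulant matrices commute
and that the reversal matrix `R` satisfies `R X = Xᵀ R` for circulant `X`.
-/

open Matrix

section Autocorrelation

variable {G R : Type*} [AddCommGroup G] [Fintype G] [NonUnitalNonAssocSemiring R]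

def paf (v : G → R) (s : G) : R := ∑ g, v g * v (g + s)

lemma circulant_mul_transpose_apply (v : G → R) (i j : G) :
    (circulant v * (circulant v)ᵀ) i j = paf v (j - i) := by
  simp only [mul_apply, transpose_apply, circulant_apply, paf]
  refine Fintype.sum_equiv (Equiv.subLeft i) _ _ fun k => ?_
  rw [Equiv.subLeft_apply, sub_add_sub_cancel']

end Autocorrelation

section Quaternion

variable {R : Type*} [CommRing R]

/-- The matrix of left multiplication by the conjugate quaternion `x₀ - x₁i - x₂j - x₃k`. -/
def quaternionMatrix (x : Fin 4 → R) : Matrix (Fin 4) (Fin 4) R :=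
  !![x 0, x 1, x 2, x 3; -x 1, x 0, x 3, -x 2; -x 2, -x 3, x 0, x 1; -x 3, x 2, -x 1, x 0]

lemma quaternionMatrix_transpose_mul (x : Fin 4 → R) :
    (quaternionMatrix x)ᵀ * quaternionMatrix x = (∑ i, x i ^ 2) • 1 := by
  ext i j
  fin_cases i <;> fin_cases j <;>
    simp [quaternionMatrix, mul_apply, Fin.sum_univ_four, one_apply] <;> ring

lemma quaternionMatrix_apply (x : Fin 4 → R) (r k : Fin 4) :
    ∃ l, quaternionMatrix x r k = x l ∨ quaternionMatrix x r k = -x l := by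
  fin_cases r <;> fin_cases k <;> simp [quaternionMatrix] <;>
    first | exact ⟨_, .inl rfl⟩ | exact ⟨_, .inr rfl⟩

lemma quaternionMatrix_mulVec_dotProduct (x u w : Fin 4 → R) :
    (quaternionMatrix x *ᵥ u) ⬝ᵥ (quaternionMatrix x *ᵥ w) = (∑ i, x i ^ 2) * (u ⬝ᵥ w) := by
  rw [dotProduct_mulVec, ← mulVec_transpose, mulVec_mulVec, quaternionMatrix_transpose_mul,
    smul_mulVec, one_mulVec, smul_dotProduct, smul_eq_mul]

end Quaternion

section GoethalsSeidel

variable {G R : Type*} [AddCommGroup G] [DecidableEq G] [CommRing R]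

variable (G R) in
def reversal : Matrix G G R := (Equiv.neg G).permMatrix R

lemma reversal_transpose : (reversal G R)ᵀ = reversal G R := by
  simp [reversal, Equiv.Perm.inv_def]

variable [Fintype G]

lemma reversal_mul_reversal : reversal G R * reversal G R = 1 := by
  rw [reversal, ← permMatrix_mul]
  convert permMatrix_one
  ext
  simp [Equiv.Perm.mul_apply]

lemma mul_reversal_apply (M : Matrix G G R) (i j : G) : (M * reversal G R) i j = M i (-j) := by
  simp [reversal, PEquiv.mul_toMatrix_toPEquiv]

lemma reversal_mul_circulant (v : G → R) :
    reversal G R * circulant v = circulant (fun i => v (-i)) * reversal G R := by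
  ext i j
  simp [reversal, PEquiv.toMatrix_toPEquiv_mul, PEquiv.mul_toMatrix_toPEquiv]
  abel_nf

lemma reversal_mul_circulant_mul (v : G → R) (M : Matrix G G R) :
    reversal G R * (circulant v * M) = circulant (fun i => v (-i)) * (reversal G R * M) := by
  rw [← Matrix.mul_assoc, reversal_mul_circulant, Matrix.mul_assoc]

omit [DecidableEq G] in
lemma circulant_mul_circulant_mul_comm (v w : G → R) (M : Matrix G G R) :
    circulant v * (circulant w * M) = circulant w * (circulant v * M) := by
  rw [← Matrix.mul_assoc, circulant_mul_comm, Matrix.mul_assoc]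

def goethalsSeidelBlocks (v : Fin 4 → G → R) : Matrix (Fin 4) (Fin 4) (Matrix G G R) :=
  let A := circulant (v 0)
  let B := circulant (v 1)
  let C := circulant (v 2)
  let D := circulant (v 3)
  let P := reversal G R
  !![A, B * P, C * P, D * P;
    -(B * P), A, Dᵀ * P, -(Cᵀ * P);
    -(C * P), -(Dᵀ * P), A, Bᵀ * P;
    -(D * P), Cᵀ * P, -(Bᵀ * P), A]

def goethalsSeidel (v : Fin 4 → G → R) : Matrix (Fin 4 × G) (Fin 4 × G) R :=
  comp _ _ _ _ _ (goethalsSeidelBlocks v)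

lemma goethalsSeidelBlocks_mul_transpose {v : Fin 4 → G → R} {k : R}
    (hv : ∑ r, circulant (v r) * (circulant (v r))ᵀ = k • 1) :
    goethalsSeidelBlocks v * (goethalsSeidelBlocks v)ᵀ.map (·ᵀ) = diagonal fun _ => k • 1 := by
  simp only [Fin.sum_univ_four, transpose_circulant] at hv
  ext1 p q
  fin_cases p <;> fin_cases q <;>
    simp only [goethalsSeidelBlocks, mul_apply, Fin.sum_univ_four, map_apply, transpose_apply,
      Fin.zero_eta, Fin.mk_one, Fin.reduceFinMk, Fin.isValue, of_apply, cons_val_zero,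
      cons_val_one, cons_val_two, cons_val_three, head_cons, tail_cons, diagonal_apply,
      Fin.reduceEq, reduceIte, transpose_mul, transpose_neg, reversal_transpose,
      transpose_circulant, Matrix.neg_mul, Matrix.mul_neg, neg_neg, Matrix.mul_assoc,
      reversal_mul_circulant, reversal_mul_circulant_mul, reversal_mul_reversal, Matrix.mul_one,
      circulant_mul_circulant_mul_comm, circulant_mul_comm]
  all_goals (try rw [← hv]) <;> abel1

theorem goethalsSeidel_mul_transpose {v : Fin 4 → G → R} {k : R}
    (hv : ∑ r, circulant (v r) * (circulant (v r))ᵀ = k • 1) :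
    goethalsSeidel v * (goethalsSeidel v)ᵀ = k • 1 := by
  rw [goethalsSeidel, transpose_comp, ← compRingEquiv_apply, ← compRingEquiv_apply, ← map_mul,
    compRingEquiv_apply, goethalsSeidelBlocks_mul_transpose hv, smul_one_eq_diagonal,
    comp_diagonal_diagonal, smul_one_eq_diagonal]

theorem goethalsSeidel_apply_mem {v : Fin 4 → G → R} {S : Set R} (hS : ∀ w ∈ S, -w ∈ S)
    (hv : ∀ r g, v r g ∈ S) (p q : Fin 4 × G) : goethalsSeidel v p q ∈ S := by
  rcases p with ⟨p, i⟩
  rcases q with ⟨q, j⟩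
  fin_cases p <;> fin_cases q <;>
    simp only [goethalsSeidel, comp_apply, goethalsSeidelBlocks, Fin.zero_eta, Fin.mk_one,
      Fin.reduceFinMk, Fin.isValue, of_apply, cons_val_zero, cons_val_one, cons_val_two,
      cons_val_three, head_cons, tail_cons, Matrix.neg_apply, mul_reversal_apply, transpose_apply,
      circulant_apply] <;>
    first | exact hv _ _ | exact hS _ (hv _ _)

end GoethalsSeidel

section PeriodicT

variable {G R : Type*} [AddCommGroup G] [Fintype G] [CommRing R]

structure IsPeriodicTSeq (t : Fin 4 → G → ℤ) : Prop where
  exists_single : ∀ g, ∃ k, (t k g = 1 ∨ t k g = -1) ∧ ∀ l ≠ k, t l g = 0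
  sum_paf_eq_zero : ∀ s ≠ 0, ∑ k, paf (t k) s = 0

def quaternionCombination (x : Fin 4 → R) (t : Fin 4 → G → ℤ) (r : Fin 4) (g : G) : R :=
  (quaternionMatrix x *ᵥ fun k => (t k g : R)) r

lemma sum_paf_quaternionCombination (x : Fin 4 → R) (t : Fin 4 → G → ℤ) (s : G) :
    ∑ r, paf (quaternionCombination x t r) s = (∑ i, x i ^ 2) * ((∑ k, paf (t k) s : ℤ) : R) := by
  calc ∑ r, paf (quaternionCombination x t r) s
      = ∑ g, (quaternionMatrix x *ᵥ fun k => (t k g : R)) ⬝ᵥ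
          (quaternionMatrix x *ᵥ fun k => (t k (g + s) : R)) := Finset.sum_comm
    _ = (∑ i, x i ^ 2) * ((∑ k, paf (t k) s : ℤ) : R) := by
      simp only [quaternionMatrix_mulVec_dotProduct, ← Finset.mul_sum]
      simp only [dotProduct, paf]
      push_cast
      rw [Finset.sum_comm]

namespace IsPeriodicTSeq

variable {t : Fin 4 → G → ℤ}

lemma sum_mul_self (ht : IsPeriodicTSeq t) (g : G) : ∑ k, t k g * t k g = 1 := by
  obtain ⟨k, hk, hzero⟩ := ht.exists_single g
  rw [Finset.sum_eq_single k (fun l _ hl => by rw [hzero l hl, zero_mul]) (by simp)]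
  rcases hk with hk | hk <;> simp [hk]

lemma sum_paf [DecidableEq G] (ht : IsPeriodicTSeq t) (s : G) :
    ∑ k, paf (t k) s = if s = 0 then (Fintype.card G : ℤ) else 0 := by
  split_ifs with hs
  · simp [hs, paf, Finset.sum_comm (γ := Fin 4), ht.sum_mul_self]
  · exact ht.sum_paf_eq_zero s hs

lemma sum_circulant_mul_transpose [DecidableEq G] (ht : IsPeriodicTSeq t) (x : Fin 4 → R) :
    ∑ r, circulant (quaternionCombination x t r) * (circulant (quaternionCombination x t r))ᵀ =
      ((Fintype.card G : R) * ∑ i, x i ^ 2) • 1 := by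
  ext i j
  rw [Matrix.sum_apply]
  simp only [circulant_mul_transpose_apply, sum_paf_quaternionCombination, ht.sum_paf,
    Matrix.smul_apply, one_apply, sub_eq_zero, eq_comm (a := j)]
  split_ifs <;> simp [mul_comm]

lemma quaternionCombination_apply (ht : IsPeriodicTSeq t) (x : Fin 4 → R) (r : Fin 4) (g : G) :
    ∃ l, quaternionCombination x t r g = x l ∨ quaternionCombination x t r g = -x l := by
  obtain ⟨k, hk, hzero⟩ := ht.exists_single g
  obtain ⟨l, hl⟩ := quaternionMatrix_apply x r k
  have hcomb : quaternionCombination x t r g = quaternionMatrix x r k * (t k g : R) := by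
    rw [quaternionCombination, mulVec, dotProduct,
      Finset.sum_eq_single k (fun l _ hl => by simp [hzero l hl]) (by simp)]
  refine ⟨l, ?_⟩
  rcases hk with hk | hk <;> rcases hl with hl | hl <;> simp [hcomb, hk, hl]

end IsPeriodicTSeq

end PeriodicT

open MvPolynomial in
theorem IsPeriodicTSeq.exists_isOD4 {G : Type*} [AddCommGroup G] [Fintype G] [DecidableEq G]
    {t : Fin 4 → G → ℤ} (ht : IsPeriodicTSeq t) :
    ∃ S, IsOD4 (4 * Fintype.card G) (Fintype.card G) S := by
  let e : Fin (4 * Fintype.card G) ≃ Fin 4 × G :=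
    finProdFinEquiv.symm.trans ((Equiv.refl _).prodCongr (Fintype.equivFin G).symm)
  let M := goethalsSeidel (quaternionCombination (X : Fin 4 → MvPolynomial (Fin 4) ℤ) t)
  refine ⟨M.submatrix e e, fun i j => ?_, ?_⟩
  · refine goethalsSeidel_apply_mem (S := {w | w = 0 ∨ ∃ k, w = X k ∨ w = -X k}) ?_ ?_ _ _
    · rintro w (rfl | ⟨k, rfl | rfl⟩)
      exacts [.inl neg_zero, .inr ⟨k, .inr rfl⟩, .inr ⟨k, .inl (neg_neg _)⟩]
    · exact fun r g => .inr (ht.quaternionCombination_apply X r g)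
  · rw [transpose_submatrix, submatrix_mul_equiv,
      goethalsSeidel_mul_transpose (ht.sum_circulant_mul_transpose X), submatrix_smul,
      Pi.smul_apply, Pi.smul_apply, submatrix_one_equiv, Fin.sum_univ_four]

section TSequence

def cyclic (n : ℕ) (a : ℕ → ℤ) (m : ZMod n) : ℤ := a (m.val + 1)

lemma paf_cyclic {n : ℕ} [NeZero n] (a : ℕ → ℤ) (s : ZMod n) :
    paf (cyclic n a) s = naf n a s.val + naf n a (n - s.val) := by
  have hsn : s.val < n := ZMod.val_lt s
  have hrange : paf (cyclic n a) s = ∑ i ∈ Finset.range n, a (i + 1) * a ((i + s.val) % n + 1) := by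
    obtain ⟨k, rfl⟩ := Nat.exists_eq_add_one_of_ne_zero (NeZero.ne n)
    rw [← Fin.sum_univ_eq_sum_range (fun i => a (i + 1) * a ((i + s.val) % (k + 1) + 1))]
    rfl
  rw [hrange, ← Finset.sum_range_add_sum_Ico _ (Nat.sub_le n s.val), Finset.sum_Ico_eq_sum_range]
  congr 1
  · refine Finset.sum_congr rfl fun i hi => ?_
    rw [Finset.mem_range] at hi
    rw [Nat.mod_eq_of_lt (by omega), add_right_comm]
  · refine Finset.sum_congr rfl fun i hi => ?_
    rw [Finset.mem_range] at hi
    have hwrap : (n - s.val + i + s.val) % n = i := by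
      rw [show n - s.val + i + s.val = i + n by omega, Nat.add_mod_right, Nat.mod_eq_of_lt (by omega)]
    rw [hwrap, mul_comm, show n - s.val + i + 1 = i + 1 + (n - s.val) by omega]

variable {n : ℕ} {a b c d : ℕ → ℤ}

lemma IsTS.isPeriodicTSeq [NeZero n] (h : IsTS n a b c d) :
    IsPeriodicTSeq ![cyclic n a, cyclic n b, cyclic n c, cyclic n d] where
  exists_single g := by
    obtain ⟨ha, hb, hc, hd, hone, -⟩ := h
    have h1 : 1 ≤ g.val + 1 := by omega
    have h2 : g.val + 1 ≤ n := ZMod.val_lt g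
    rcases hone _ h1 h2 with ⟨hx, _⟩ | ⟨_, hx, _⟩ | ⟨_, _, hx, _⟩ | ⟨_, _, _, hx⟩
    · exact ⟨0, (ha _ h1 h2).resolve_left hx, fun l hl => by fin_cases l <;> simp_all [cyclic]⟩
    · exact ⟨1, (hb _ h1 h2).resolve_left hx, fun l hl => by fin_cases l <;> simp_all [cyclic]⟩
    · exact ⟨2, (hc _ h1 h2).resolve_left hx, fun l hl => by fin_cases l <;> simp_all [cyclic]⟩
    · exact ⟨3, (hd _ h1 h2).resolve_left hx, fun l hl => by fin_cases l <;> simp_all [cyclic]⟩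
  sum_paf_eq_zero s hs := by
    obtain ⟨-, -, -, -, -, hnaf⟩ := h
    have hs₀ : 0 < s.val := Nat.pos_of_ne_zero ((ZMod.val_ne_zero s).mpr hs)
    have hsn : s.val < n := ZMod.val_lt s
    have h₁ := hnaf s.val hs₀
    have h₂ := hnaf (n - s.val) (by omega)
    simp only [Fin.sum_univ_four, Matrix.cons_val, paf_cyclic]
    linarith

end TSequence

/-- If T-sequences of length `n` exist, then there exists an orthogonal design
`OD(4n; n,n,n,n)`. -/
theorem TS_implies_OD (n : ℕ) (hTS : ∃ a b c d : ℕ → ℤ, IsTS n a b c d) :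
    ∃ S : Matrix (Fin (4 * n)) (Fin (4 * n)) (MvPolynomial (Fin 4) ℤ), IsOD4 (4 * n) n S := by
  obtain ⟨a, b, c, d, h⟩ := hTS
  rcases Nat.eq_zero_or_pos n with rfl | hn
  · exact ⟨0, fun i => i.elim0, ext fun i => i.elim0⟩
  · have : NeZero n := ⟨hn.ne'⟩
    have hOD := h.isPeriodicTSeq.exists_isOD4
    rwa [ZMod.card] at hOD
end

section
/- If there exists an orthogonal design OD(4t; t,t,t,t) and there exist Williamson-type matrices of order n, then there exists a Hadamard matrix of order 4tn. -/
/-- Williamson-type matrices of order `n`: four symmetric, pairwise commuting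
`{±1}`-matrices `W₁, W₂, W₃, W₄` of order `n` with `W₁² + W₂² + W₃² + W₄² = 4n Iₙ`. -/
def IsWilliamsonType (n : ℕ) (W : Fin 4 → Matrix (Fin n) (Fin n) ℤ) : Prop :=
  (∀ k, ∀ i j, W k i j = 1 ∨ W k i j = -1) ∧
  (∀ k, (W k).transpose = W k) ∧
  (∀ k l, W k * W l = W l * W k) ∧
  W 0 ^ 2 + W 1 ^ 2 + W 2 ^ 2 + W 3 ^ 2 = ((4 * n : ℤ)) • 1

/-- A Hadamard matrix of order `m`: an `m × m` matrix with entries in `{+1,-1}`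
such that `H Hᵀ = m I_m`. -/
def IsHadamard (m : ℕ) (H : Matrix (Fin m) (Fin m) ℤ) : Prop :=
  (∀ i j, H i j = 1 ∨ H i j = -1) ∧ H * H.transpose = (m : ℤ) • 1

/-!
Substituting the Williamson matrices `W₁, …, W₄` for the indeterminates `x₁, …, x₄` of the
orthogonal design `S` gives a `4tn × 4tn` block matrix `H`. Since the `Wₖ` commute, substitution
is a ring homomorphism `φ`, and since they are symmetric, every `φ p` is symmetric; hence
`H Hᵀ = φ(S Sᵀ) = φ(t ∑ xₖ²) I = t (∑ Wₖ²) I = 4tn I`. An `OD(4t; t,t,t,t)` has no zero entries,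
so every block of `H` is `±Wₖ` and `H` is a `±1`-matrix.
-/

open MvPolynomial Matrix

section

open scoped IsMulCommutative

variable {ι R A : Type*} [CommRing R] [Ring A] [Algebra R A]

theorem Algebra.isMulCommutative_adjoin_range {x : ι → A} (hx : ∀ k l, Commute (x k) (x l)) :
    IsMulCommutative (Algebra.adjoin R (Set.range x)) :=
  Algebra.isMulCommutative_adjoin R <| by rintro _ ⟨k, rfl⟩ _ ⟨l, rfl⟩; exact hx k l

namespace MvPolynomial

noncomputable def aevalOfCommute (x : ι → A) (hx : ∀ k l, Commute (x k) (x l)) :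
    MvPolynomial ι R →ₐ[R] A :=
  haveI := Algebra.isMulCommutative_adjoin_range (R := R) hx
  (Algebra.adjoin R (Set.range x)).val.comp
    (aeval fun k => ⟨x k, Algebra.subset_adjoin ⟨k, rfl⟩⟩)

variable (x : ι → A) (hx : ∀ k l, Commute (x k) (x l))

@[simp]
theorem aevalOfCommute_X (k : ι) : aevalOfCommute x hx (X k : MvPolynomial ι R) = x k := by
  simp [aevalOfCommute]

theorem commute_aevalOfCommute (p q : MvPolynomial ι R) :
    Commute (aevalOfCommute x hx p) (aevalOfCommute x hx q) :=
  have := Algebra.isMulCommutative_adjoin_range (R := R) hx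
  (Commute.all _ _).map (Algebra.adjoin R (Set.range x)).val

end MvPolynomial

end

namespace Matrix

theorem transpose_aevalOfCommute {ι n R : Type*} [CommRing R] [Fintype n] [DecidableEq n]
    {W : ι → Matrix n n R} (hW : ∀ k l, Commute (W k) (W l)) (hsymm : ∀ k, (W k)ᵀ = W k)
    (p : MvPolynomial ι R) : (aevalOfCommute W hW p)ᵀ = aevalOfCommute W hW p := by
  induction p using MvPolynomial.induction_on with
  | C a =>
    rw [← algebraMap_eq, AlgHom.commutes, Algebra.algebraMap_eq_smul_one, transpose_smul,
      transpose_one]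
  | add p q hp hq => rw [map_add, transpose_add, hp, hq]
  | mul_X p k hp =>
    rw [map_mul, transpose_mul, aevalOfCommute_X, hsymm, hp]
    simpa using (commute_aevalOfCommute W hW (X k) p).eq

theorem comp_map_mul_transpose_comp_map {I n A R F : Type*} [Fintype I] [Fintype n]
    [NonUnitalNonAssocSemiring A] [NonUnitalCommSemiring R] [FunLike F A (Matrix n n R)]
    [NonUnitalRingHomClass F A (Matrix n n R)] (φ : F) (hφ : ∀ a, (φ a)ᵀ = φ a)
    (S : Matrix I I A) :
    comp I I n n R (S.map φ) * (comp I I n n R (S.map φ))ᵀ = comp I I n n R ((S * Sᵀ).map φ) := by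
  have hT : (S.map φ)ᵀ.map transpose = Sᵀ.map φ := Matrix.ext fun i j => hφ (S j i)
  rw [transpose_comp, hT, ← compRingEquiv_apply, ← compRingEquiv_apply, ← map_mul, Matrix.map_mul,
    compRingEquiv_apply]

theorem comp_map_smul_one {I n A R F : Type*} [DecidableEq I] [DecidableEq n] [Semiring A]
    [AddGroupWithOne R] [FunLike F A (Matrix n n R)] [ZeroHomClass F A (Matrix n n R)] (φ : F)
    {c : A} {N : ℤ} (hc : φ c = N • 1) :
    comp I I n n R ((c • (1 : Matrix I I A)).map φ) = N • 1 := by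
  rw [smul_one_eq_diagonal, diagonal_map (map_zero φ), hc]
  ext ⟨i, a⟩ ⟨j, b⟩
  rcases eq_or_ne i j with rfl | h <;> simp [*, one_apply, Prod.ext_iff, Matrix.intCast_apply]

end Matrix

/-- Evaluating the diagonal of `S Sᵀ` at `x = (1,1,1,1)` shows that each row has `4t` nonzero
entries. -/
theorem IsOD4.exists_eq_X_or_eq_neg_X {t : ℕ}
    {S : Matrix (Fin (4 * t)) (Fin (4 * t)) (MvPolynomial (Fin 4) ℤ)} (hS : IsOD4 (4 * t) t S)
    (i j : Fin (4 * t)) : ∃ k, S i j = X k ∨ S i j = -X k := by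
  obtain ⟨hentries, hmul⟩ := hS
  set ev := MvPolynomial.eval (fun _ : Fin 4 => (1 : ℤ))
  have hle : ∀ m, ev (S i m) ^ 2 ≤ 1 := fun m => by
    rcases hentries i m with h | ⟨k, h | h⟩ <;> simp [h, ev]
  have hrow : ∑ m, ev (S i m) ^ 2 = ∑ _m : Fin (4 * t), 1 :=
    calc ∑ m, ev (S i m) ^ 2 = ev ((S * Sᵀ) i i) := by simp [mul_apply, sq]
      _ = ∑ _m : Fin (4 * t), 1 := by simp [hmul, ev]; ring
  have hj := (Finset.sum_eq_sum_iff_of_le fun m _ => hle m).1 hrow j (Finset.mem_univ j)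
  rcases hentries i j with h | h
  · simp [h] at hj
  · exact h

theorem isHadamard_reindex_finProdFinEquiv {a b : ℕ} (H : Matrix (Fin a × Fin b) (Fin a × Fin b) ℤ)
    (hentries : ∀ p q, H p q = 1 ∨ H p q = -1) (hmul : H * Hᵀ = ((a * b : ℕ) : ℤ) • 1) :
    IsHadamard (a * b) (reindex finProdFinEquiv finProdFinEquiv H) := by
  refine ⟨fun i j => hentries _ _, ?_⟩
  rw [reindex_apply, transpose_submatrix, submatrix_mul_equiv, hmul]
  exact congrArg (((a * b : ℕ) : ℤ) • ·) (submatrix_one_equiv (α := ℤ) finProdFinEquiv.symm)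

namespace IsWilliamsonType

variable {n : ℕ} {W : Fin 4 → Matrix (Fin n) (Fin n) ℤ}

theorem commute (hW : IsWilliamsonType n W) (k l : Fin 4) : Commute (W k) (W l) :=
  hW.2.2.1 k l

theorem aevalOfCommute_apply_eq_one_or_neg_one (hW : IsWilliamsonType n W)
    {p : MvPolynomial (Fin 4) ℤ} (hp : ∃ k, p = X k ∨ p = -X k) (a b : Fin n) :
    aevalOfCommute W hW.commute p a b = 1 ∨ aevalOfCommute W hW.commute p a b = -1 := by
  obtain ⟨k, rfl | rfl⟩ := hp
  · rw [aevalOfCommute_X]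
    exact hW.1 k a b
  · rw [map_neg, aevalOfCommute_X, neg_apply, neg_eq_iff_eq_neg, neg_inj]
    exact (hW.1 k a b).symm

theorem aevalOfCommute_natCast_mul_sum_sq (hW : IsWilliamsonType n W) (t : ℕ) :
    aevalOfCommute W hW.commute
        ((t : MvPolynomial (Fin 4) ℤ) * (X 0 ^ 2 + X 1 ^ 2 + X 2 ^ 2 + X 3 ^ 2)) =
      ((4 * t * n : ℕ) : ℤ) • 1 := by
  simp only [map_mul, map_natCast, map_add, map_pow, aevalOfCommute_X, hW.2.2.2]
  rw [← nsmul_eq_mul, ← Nat.cast_smul_eq_nsmul ℤ, smul_smul]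
  congr 1
  push_cast
  ring

end IsWilliamsonType

/-- If there exists an orthogonal design `OD(4t; t,t,t,t)` and Williamson-type
matrices of order `n`, then there exists a Hadamard matrix of order `4tn`. -/
theorem OD_and_williamson_implies_hadamard (t n : ℕ)
    (hOD : ∃ S : Matrix (Fin (4 * t)) (Fin (4 * t)) (MvPolynomial (Fin 4) ℤ), IsOD4 (4 * t) t S)
    (hW : ∃ W : Fin 4 → Matrix (Fin n) (Fin n) ℤ, IsWilliamsonType n W) :
    ∃ H : Matrix (Fin (4 * t * n)) (Fin (4 * t * n)) ℤ, IsHadamard (4 * t * n) H := by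
  obtain ⟨S, hS⟩ := hOD
  obtain ⟨W, hW⟩ := hW
  set φ := aevalOfCommute (R := ℤ) W hW.commute
  refine ⟨_, isHadamard_reindex_finProdFinEquiv (comp _ _ _ _ _ (S.map φ)) ?_ ?_⟩
  · rintro ⟨i, a⟩ ⟨j, b⟩
    exact hW.aevalOfCommute_apply_eq_one_or_neg_one (hS.exists_eq_X_or_eq_neg_X i j) a b
  · rw [comp_map_mul_transpose_comp_map φ (transpose_aevalOfCommute hW.commute hW.2.1), hS.2,
      comp_map_smul_one φ (hW.aevalOfCommute_natCast_mul_sum_sq t)]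
end
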